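/- If {Λ_j} is a (C,C')-controlled g-Bessel sequence with bound B, then the synthesis operator T({g_j}) = Σ_j (CC')^{1/2} Λ_j* g_j, defined on the ℓ²-direct sum of the H_j, is well defined (the series converges) and bounded with ‖T‖ ≤ √B. -/

import Mathlib

/-!
Writing K i = (Λ i)† Λ i, the operator R commutes with K i: the commutator D = K i R - R K i is
skew-adjoint and anticommutes with R, because K i commutes with R² = C C'. A skew D satisfies
D² x ≈ -‖D‖² x for x with ‖D x‖ ≈ ‖D‖ ‖x‖, whereas anticommutation gives ⟪R x, D² x⟫ ≥ 0, so
‖D‖² ⟪R x, x⟫ is nearly nonpositive; as R is invertible, ⟪R x, x⟫ ≥ c ‖x‖², and D = 0.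
Consequently ⟪Λ i (C f), Λ i (C' f)⟫ = ‖Λ i (R f)‖², i.e. the family Λ i ∘ R is an ordinary
g-Bessel sequence with bound B. Its analysis operator f ↦ (Λ i (R f))ᵢ into ℓ² has norm ≤ √B,
and the synthesis operator is the adjoint, which maps the i-th coordinate vector with entry x
to R (Λ i)† x.
-/

open scoped RealInnerProductSpace
open ContinuousLinearMap

namespace ContinuousLinearMap

theorem eq_zero_of_norm_sq_apply_le {𝕜 E F : Type*} [NontriviallyNormedField 𝕜]
    [NormedAddCommGroup E] [NormedSpace 𝕜 E] [NormedAddCommGroup F] [NormedSpace 𝕜 F]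
    {A : E →L[𝕜] F} {t : ℝ}
    (ht : t < 1) (hA : ∀ x, ‖A x‖ ^ 2 ≤ t * ‖A‖ ^ 2 * ‖x‖ ^ 2) : A = 0 := by
  by_contra hne
  have hpos : 0 < ‖A‖ := norm_pos_iff.2 hne
  have hle : ‖A‖ ≤ √t * ‖A‖ := A.opNorm_le_bound (by positivity) fun x => by
    have := Real.sqrt_le_sqrt (hA x)
    rwa [Real.sqrt_sq (norm_nonneg _), show t * ‖A‖ ^ 2 * ‖x‖ ^ 2 = t * (‖A‖ * ‖x‖) ^ 2 by ring,
      Real.sqrt_mul' _ (sq_nonneg _), Real.sqrt_sq (by positivity), ← mul_assoc] at this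
  have : 1 ≤ √t := le_of_mul_le_mul_right (by simpa using hle) hpos
  exact absurd (Real.one_le_sqrt.1 this) (not_le.2 ht)

section RealInnerProductSpace

variable {H : Type*} [NormedAddCommGroup H] [InnerProductSpace ℝ H]

theorem IsPositive.inner_sq_le_inner_mul_inner {R : H →L[ℝ] H} (hR : R.IsPositive) (u v : H) :
    ⟪R u, v⟫ ^ 2 ≤ ⟪R u, u⟫ * ⟪R v, v⟫ := by
  have hquad : ∀ t : ℝ, 0 ≤ ⟪R v, v⟫ * (t * t) + 2 * ⟪R u, v⟫ * t + ⟪R u, u⟫ := by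
    intro t
    have hvu : ⟪R v, u⟫ = ⟪R u, v⟫ := by rw [hR.inner_left_eq_inner_right, real_inner_comm]
    have := hR.inner_nonneg_left (u + t • v)
    simp only [map_add, map_smul, inner_add_left, inner_add_right, real_inner_smul_left,
      real_inner_smul_right, hvu] at this
    linarith
  have := discrim_le_zero hquad
  rw [discrim] at this
  linarith

theorem IsPositive.norm_sq_le_opNorm_mul_inner {R : H →L[ℝ] H} (hR : R.IsPositive) (x : H) :
    ‖R x‖ ^ 2 ≤ ‖R‖ * ⟪R x, x⟫ := by
  have hcs := hR.inner_sq_le_inner_mul_inner x (R x)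
  have hRRx : ⟪R (R x), R x⟫ ≤ ‖R‖ * ‖R x‖ ^ 2 :=
    (real_inner_le_norm _ _).trans (by nlinarith [R.le_opNorm (R x), norm_nonneg (R x)])
  rw [real_inner_self_eq_norm_sq] at hcs
  have := hR.inner_nonneg_left x
  rcases (sq_nonneg ‖R x‖).eq_or_lt with h0 | hpos
  · rw [← h0]; positivity
  · nlinarith

variable [CompleteSpace H]

theorem norm_sq_apply_apply_add_le_of_adjoint_eq_neg {A : H →L[ℝ] H} (hA : A.adjoint = -A)
    (x : H) :
    ‖A (A x) + ‖A‖ ^ 2 • x‖ ^ 2 ≤ ‖A‖ ^ 2 * (‖A‖ ^ 2 * ‖x‖ ^ 2 - ‖A x‖ ^ 2) := by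
  have hcross : ⟪A (A x), x⟫ = -‖A x‖ ^ 2 := by
    rw [← adjoint_inner_right, hA, neg_apply, inner_neg_right, real_inner_self_eq_norm_sq]
  have hAAx : ‖A (A x)‖ ≤ ‖A‖ * ‖A x‖ := A.le_opNorm _
  rw [norm_add_sq_real, real_inner_smul_right, hcross, norm_smul,
    Real.norm_of_nonneg (by positivity)]
  nlinarith [norm_nonneg (A (A x))]

theorem IsPositive.inner_apply_apply_apply_nonneg_of_anticommute {R A : H →L[ℝ] H}
    (hR : R.IsPositive) (hA : A.adjoint = -A) (hRA : R * A = -(A * R)) (x : H) : 0 ≤ ⟪R x, A (A x)⟫ := by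
  have : R (A x) = -A (R x) := by simpa using congr($hRA x)
  rw [← adjoint_inner_left, hA, neg_apply, inner_neg_left, ← inner_neg_left, ← this]
  exact hR.inner_nonneg_left (A x)

theorem IsPositive.sq_norm_sq_le_of_anticommute {R A : H →L[ℝ] H} (hR : R.IsPositive) {m : ℝ}
    (hm : ∀ x, ‖x‖ ≤ m * ‖R x‖) (hA : A.adjoint = -A) (hRA : R * A = -(A * R)) (x : H) :
    (‖A‖ ^ 2 * ‖x‖ ^ 2) ^ 2 ≤
      (m ^ 2 * ‖R‖ ^ 2) ^ 2 * (‖A‖ ^ 2 * ‖x‖ ^ 2) * (‖A‖ ^ 2 * ‖x‖ ^ 2 - ‖A x‖ ^ 2) := by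
  set a := ‖A‖
  set N := ‖A (A x) + a ^ 2 • x‖
  have hlow : ‖x‖ ^ 2 ≤ m ^ 2 * ‖R‖ * ⟪R x, x⟫ := by
    have := pow_le_pow_left₀ (norm_nonneg x) (hm x) 2
    nlinarith [hR.norm_sq_le_opNorm_mul_inner x]
  have hRx : a ^ 2 * ⟪R x, x⟫ ≤ ‖R‖ * ‖x‖ * N :=
    calc a ^ 2 * ⟪R x, x⟫ ≤ ⟪R x, A (A x)⟫ + a ^ 2 * ⟪R x, x⟫ := by
          linarith [hR.inner_apply_apply_apply_nonneg_of_anticommute hA hRA x]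
      _ = ⟪R x, A (A x) + a ^ 2 • x⟫ := by rw [inner_add_right, real_inner_smul_right]
      _ ≤ ‖R x‖ * N := real_inner_le_norm _ _
      _ ≤ ‖R‖ * ‖x‖ * N := by gcongr; exact R.le_opNorm x
  have hs : a ^ 2 * ‖x‖ ^ 2 ≤ m ^ 2 * ‖R‖ ^ 2 * ‖x‖ * N := by
    have : 0 ≤ m ^ 2 * ‖R‖ := by positivity
    nlinarith [mul_le_mul_of_nonneg_left hRx this, mul_le_mul_of_nonneg_left hlow (sq_nonneg a)]
  calc (a ^ 2 * ‖x‖ ^ 2) ^ 2 ≤ (m ^ 2 * ‖R‖ ^ 2 * ‖x‖ * N) ^ 2 :=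
        pow_le_pow_left₀ (by positivity) hs 2
    _ = (m ^ 2 * ‖R‖ ^ 2) ^ 2 * ‖x‖ ^ 2 * N ^ 2 := by ring
    _ ≤ (m ^ 2 * ‖R‖ ^ 2) ^ 2 * ‖x‖ ^ 2 * (a ^ 2 * (a ^ 2 * ‖x‖ ^ 2 - ‖A x‖ ^ 2)) := by
        gcongr; exact norm_sq_apply_apply_add_le_of_adjoint_eq_neg hA x
    _ = _ := by ring

theorem IsPositive.eq_zero_of_anticommute {R A : H →L[ℝ] H} (hR : R.IsPositive) {m : ℝ}
    (hm : ∀ x, ‖x‖ ≤ m * ‖R x‖) (hA : A.adjoint = -A) (hRA : R * A = -(A * R)) : A = 0 := by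
  set L := (m ^ 2 * ‖R‖ ^ 2) ^ 2
  refine eq_zero_of_norm_sq_apply_le (t := L / (L + 1)) ((div_lt_one (by positivity)).2 (by simp))
    fun x => ?_
  have hsq := hR.sq_norm_sq_le_of_anticommute hm hA hRA x
  have hAx : ‖A x‖ ^ 2 ≤ ‖A‖ ^ 2 * ‖x‖ ^ 2 := by
    rw [← mul_pow]; exact pow_le_pow_left₀ (norm_nonneg _) (A.le_opNorm x) 2
  have hL : 0 ≤ L := by positivity
  rw [div_mul_eq_mul_div, div_mul_eq_mul_div, le_div_iff₀ (by positivity), mul_assoc]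
  rcases (show 0 ≤ ‖A‖ ^ 2 * ‖x‖ ^ 2 by positivity).eq_or_lt with h0 | hpos
  · rw [← h0] at hAx ⊢; nlinarith [sq_nonneg ‖A x‖]
  · have : ‖A‖ ^ 2 * ‖x‖ ^ 2 ≤ L * (‖A‖ ^ 2 * ‖x‖ ^ 2 - ‖A x‖ ^ 2) :=
      le_of_mul_le_mul_left (by nlinarith) hpos
    nlinarith

theorem IsPositive.commute_of_commute_mul_self {R K : H →L[ℝ] H} (hR : R.IsPositive)
    (hRbij : Function.Bijective R) (hK : IsSelfAdjoint K) (hKR : Commute K (R * R)) :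
    Commute K R := by
  obtain ⟨-, k, hk⟩ := (bijective_iff_dense_range_and_antilipschitz R).1 hRbij
  refine sub_eq_zero.1 (hR.eq_zero_of_anticommute (R.bound_of_antilipschitz hk) ?_ ?_)
  · rw [← star_eq_adjoint, star_sub, star_mul, star_mul, hK.star_eq, hR.isSelfAdjoint.star_eq,
      neg_sub]
  · calc R * (K * R - R * K) = R * K * R - R * R * K := by noncomm_ring
      _ = R * K * R - K * (R * R) := by rw [hKR.eq]
      _ = -((K * R - R * K) * R) := by noncomm_ring

theorem inner_apply_apply_eq_norm_sq_of_mul_self_eq {G : Type*} [NormedAddCommGroup G]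
    [InnerProductSpace ℝ G] [CompleteSpace G] (Λ : H →L[ℝ] G) {C C' R : H →L[ℝ] H}
    (hC : IsSelfAdjoint C) (hR : IsSelfAdjoint R) (hCΛ : Commute C (Λ.adjoint ∘L Λ))
    (hRΛ : Commute R (Λ.adjoint ∘L Λ)) (hRsq : R * R = C * C') (f : H) :
    ⟪Λ (C f), Λ (C' f)⟫ = ‖Λ (R f)‖ ^ 2 := by
  have hCΛf : Λ.adjoint (Λ (C f)) = C (Λ.adjoint (Λ f)) := congr($hCΛ.eq.symm f)
  have hRΛf : Λ.adjoint (Λ (R f)) = R (Λ.adjoint (Λ f)) := congr($hRΛ.eq.symm f)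
  calc ⟪Λ (C f), Λ (C' f)⟫ = ⟪C (Λ.adjoint (Λ f)), C' f⟫ := by rw [← adjoint_inner_left, hCΛf]
    _ = ⟪Λ.adjoint (Λ f), (C * C') f⟫ := hC.isSymmetric _ _
    _ = ⟪R (Λ.adjoint (Λ f)), R f⟫ := by rw [← hRsq]; exact (hR.isSymmetric _ _).symm
    _ = ‖Λ (R f)‖ ^ 2 := by rw [← hRΛf, adjoint_inner_left, real_inner_self_eq_norm_sq]

end RealInnerProductSpace

end ContinuousLinearMap

section GBessel

variable {𝕜 E ι : Type*} [RCLike 𝕜] [NormedAddCommGroup E] [InnerProductSpace 𝕜 E]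
  {G : ι → Type*} [∀ i, NormedAddCommGroup (G i)] [∀ i, InnerProductSpace 𝕜 (G i)]

def IsGBesselSeq (A : ∀ i, E →L[𝕜] G i) (B : ℝ) : Prop :=
  ∀ f, Summable (fun i => ‖A i f‖ ^ 2) ∧ ∑' i, ‖A i f‖ ^ 2 ≤ B * ‖f‖ ^ 2

variable {A : ∀ i, E →L[𝕜] G i} {B : ℝ}

theorem IsGBesselSeq.exists_analysisOperator (hA : IsGBesselSeq A B) :
    ∃ U : E →L[𝕜] lp G 2, (∀ f i, U f i = A i f) ∧ ‖U‖ ≤ √B := by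
  have hmem : ∀ f, Memℓp (fun i => A i f) 2 := fun f =>
    memℓp_gen (by simpa [Real.rpow_two] using (hA f).1)
  let U : E →ₗ[𝕜] lp G 2 :=
    { toFun := fun f => ⟨fun i => A i f, hmem f⟩
      map_add' := fun f g => by ext i; exact map_add (A i) f g
      map_smul' := fun c f => by ext i; exact map_smul (A i) c f }
  have hU : ∀ f, ‖U f‖ ≤ √B * ‖f‖ := fun f => by
    have hnorm : ‖U f‖ ^ 2 = ∑' i, ‖A i f‖ ^ 2 := by
      simpa [U, Real.rpow_two] using lp.norm_rpow_eq_tsum (p := 2) (by norm_num) (U f)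
    calc ‖U f‖ = √(∑' i, ‖A i f‖ ^ 2) := by rw [← hnorm, Real.sqrt_sq (norm_nonneg _)]
      _ ≤ √(B * ‖f‖ ^ 2) := Real.sqrt_le_sqrt (hA f).2
      _ = √B * ‖f‖ := by rw [Real.sqrt_mul' _ (sq_nonneg _), Real.sqrt_sq (norm_nonneg _)]
  exact ⟨U.mkContinuous _ hU, fun f i => rfl, U.mkContinuous_norm_le (Real.sqrt_nonneg B) hU⟩

theorem IsGBesselSeq.exists_synthesisOperator [CompleteSpace E] [∀ i, CompleteSpace (G i)]
    (hA : IsGBesselSeq A B) :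
    ∃ T : lp G 2 →L[𝕜] E, (∀ g : lp G 2, HasSum (fun i => (A i).adjoint (g i)) (T g)) ∧
      ‖T‖ ≤ √B := by
  classical
  obtain ⟨U, hU, hUB⟩ := hA.exists_analysisOperator
  have hsingle : ∀ i x, U.adjoint (lp.single 2 i x) = (A i).adjoint x := fun i x =>
    ext_inner_right 𝕜 fun y => by
      rw [adjoint_inner_left, lp.inner_single_left, hU, adjoint_inner_left]
  refine ⟨U.adjoint, fun g => ?_, by rwa [LinearIsometryEquiv.norm_map]⟩
  simpa only [hsingle] using (lp.hasSum_single ENNReal.ofNat_ne_top g).mapL U.adjoint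

end GBessel

theorem synthesis_operator_well_defined_and_bounded_general
    {H : Type*} [NormedAddCommGroup H] [InnerProductSpace ℝ H] [CompleteSpace H]
    {ι : Type*} {G : ι → Type*} [∀ i, NormedAddCommGroup (G i)]
    [∀ i, InnerProductSpace ℝ (G i)] [∀ i, CompleteSpace (G i)]
    (Λ : ∀ i, H →L[ℝ] G i) (C C' : H →L[ℝ] H)
    (hCpos : C.IsPositive)
    (hCbij : Function.Bijective C) (hC'bij : Function.Bijective C')
    (hcommC : ∀ i, C ∘L ((Λ i).adjoint ∘L Λ i) = ((Λ i).adjoint ∘L Λ i) ∘L C)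
    (hcommC' : ∀ i, C' ∘L ((Λ i).adjoint ∘L Λ i) = ((Λ i).adjoint ∘L Λ i) ∘L C')
    (R : H →L[ℝ] H) (hRpos : R.IsPositive) (hRsq : R ∘L R = C ∘L C')
    (B : ℝ)
    (hbessel : ∀ f : H, (Summable fun i => ⟪(Λ i) (C f), (Λ i) (C' f)⟫) ∧
      ∑' i, ⟪(Λ i) (C f), (Λ i) (C' f)⟫ ≤ B * ⟪f, f⟫) :
    ∃ T : lp G 2 →L[ℝ] H,
      (∀ g : lp G 2, HasSum (fun i => R ((Λ i).adjoint (g i))) (T g)) ∧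
      ‖T‖ ≤ Real.sqrt B := by
  have hRR : Function.Bijective (R ∘ R) := by
    rw [← coe_comp, hRsq, coe_comp]
    exact hCbij.comp hC'bij
  have hRbij : Function.Bijective R := ⟨hRR.1.of_comp, hRR.2.of_comp⟩
  have hRΛ : ∀ i, Commute R ((Λ i).adjoint ∘L Λ i) := fun i => by
    refine (hRpos.commute_of_commute_mul_self hRbij
      (isPositive_adjoint_comp_self (Λ i)).isSelfAdjoint ?_).symm
    rw [mul_def, hRsq]
    exact Commute.mul_right (hcommC i).symm (hcommC' i).symm
  have hgBessel : IsGBesselSeq (fun i => Λ i ∘L R) B := fun f => by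
    simpa only [comp_apply, real_inner_self_eq_norm_sq,
      inner_apply_apply_eq_norm_sq_of_mul_self_eq (Λ _) hCpos.isSelfAdjoint hRpos.isSelfAdjoint
        (hcommC _) (hRΛ _) hRsq] using hbessel f
  obtain ⟨T, hT, hTB⟩ := hgBessel.exists_synthesisOperator
  refine ⟨T, fun g => ?_, hTB⟩
  simpa [adjoint_comp, hRpos.isSelfAdjoint.adjoint_eq] using hT g

/-- The synthesis operator of a (C,C')-controlled g-Bessel sequence with bound B
is well defined and bounded with norm at most √B. -/
theorem synthesis_operator_well_defined_and_bounded
    {H : Type*} [NormedAddCommGroup H] [InnerProductSpace ℝ H] [CompleteSpace H]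
    {ι : Type*} {G : ι → Type*} [∀ i, NormedAddCommGroup (G i)]
    [∀ i, InnerProductSpace ℝ (G i)] [∀ i, CompleteSpace (G i)]
    (Λ : ∀ i, H →L[ℝ] G i) (C C' : H →L[ℝ] H)
    (hCpos : C.IsPositive) (hC'pos : C'.IsPositive)
    (hCbij : Function.Bijective C) (hC'bij : Function.Bijective C')
    (hcomm : C ∘L C' = C' ∘L C)
    (hcommC : ∀ i, C ∘L ((Λ i).adjoint ∘L Λ i) = ((Λ i).adjoint ∘L Λ i) ∘L C)
    (hcommC' : ∀ i, C' ∘L ((Λ i).adjoint ∘L Λ i) = ((Λ i).adjoint ∘L Λ i) ∘L C')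
    (R : H →L[ℝ] H) (hRpos : R.IsPositive) (hRsq : R ∘L R = C ∘L C')
    (B : ℝ) (hB : 0 < B)
    (hbessel : ∀ f : H, (Summable fun i => ⟪(Λ i) (C f), (Λ i) (C' f)⟫) ∧
      ∑' i, ⟪(Λ i) (C f), (Λ i) (C' f)⟫ ≤ B * ⟪f, f⟫) :
    ∃ T : lp G 2 →L[ℝ] H,
      (∀ g : lp G 2, HasSum (fun i => R ((Λ i).adjoint (g i))) (T g)) ∧
      ‖T‖ ≤ Real.sqrt B :=
  synthesis_operator_well_defined_and_bounded_general Λ C C' hCpos hCbij hC'bij hcommC hcommC' R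
    hRpos hRsq B hbessel
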